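/- arXiv:1904.11168 — 3 statements merged into one kernel-verified Lean document; each statement's English description precedes it below -/
import Mathlib

section
/- Let κ be an uncountable regular cardinal. For every club subset C of [κ]^ω there exists a club subset C̃ of [κ]^ω with C̃ ⊆ C such that (a) C̃ is closed in the Ellentuck topology on [κ]^ω, and (b) C \ C̃ is weakly unbounded, i.e., for every finite a ⊆ κ there exists x ∈ C \ C̃ with a ⊆ x. -/
open Set Cardinal

/-- `x` is a countably infinite subset, i.e. an element of `[κ]^ω`. -/
def CtblInf {α : Type*} (x : Set α) : Prop := x.Countable ∧ x.Infinite

/-- `D` is a club subset of `[κ]^ω`: it consists of countably infinite sets,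
is cofinal (every countable set is contained in a member of `D`), and is
closed under unions of `⊆`-increasing `ω`-sequences of its elements. -/
def IsCtblClub {α : Type*} (D : Set (Set α)) : Prop :=
  (∀ x ∈ D, CtblInf x) ∧
  (∀ y : Set α, y.Countable → ∃ x ∈ D, y ⊆ x) ∧
  (∀ s : ℕ → Set α, Monotone s → (∀ n, s n ∈ D) → (⋃ n, s n) ∈ D)

/-- `S` is closed in the Ellentuck topology on `[κ]^ω`: every countably infinite
`x` all of whose basic neighborhoods `[a, x]` (with `a ⊆ x` finite) meet `S`
belongs to `S`. -/
def EllentuckClosed {α : Type*} (S : Set (Set α)) : Prop :=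
  ∀ x : Set α, CtblInf x →
    (∀ a : Set α, a.Finite → a ⊆ x → ∃ y ∈ S, CtblInf y ∧ a ⊆ y ∧ y ⊆ x) →
    x ∈ S

/-- Recursive closure function: `FF pick s = pick (s ∪ ⋃ t ⊊ s, FF pick t)`. -/
noncomputable def FF {α : Type*} [DecidableEq α] (pick : Set α → Set α) (s : Finset α) : Set α :=
  pick (↑s ∪ ⋃ t ∈ s.ssubsets, FF pick t)
termination_by s.card
decreasing_by
  exact Finset.card_lt_card (Finset.mem_ssubsets.1 (by assumption))

theorem FF_eq {α : Type*} [DecidableEq α] (pick : Set α → Set α) (s : Finset α) :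
    FF pick s = pick (↑s ∪ ⋃ t ∈ s.ssubsets, FF pick t) := by
  rw [FF]

theorem finset_subset_iUnion_mono {α : Type*} {s : ℕ → Set α} (hmono : Monotone s)
    (t : Finset α) : ↑t ⊆ (⋃ n, s n) → ∃ n, (↑t : Set α) ⊆ s n := by
  classical
  induction t using Finset.induction_on with
  | empty => exact fun _ => ⟨0, by simp⟩
  | @insert a u ha ih =>
    intro hsub
    have husub : (↑u : Set α) ⊆ ⋃ n, s n := by
      intro z hz
      apply hsub
      rw [Finset.coe_insert]
      exact Set.mem_insert_of_mem _ hz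
    obtain ⟨n, hn⟩ := ih husub
    obtain ⟨m, hm⟩ := Set.mem_iUnion.1 (hsub (Finset.mem_coe.2 (Finset.mem_insert_self a u)))
    refine ⟨max n m, ?_⟩
    rw [Finset.coe_insert]
    exact Set.insert_subset (hmono (le_max_right n m) hm)
      (hn.trans (hmono (le_max_left n m)))

/-- For every uncountable regular cardinal `κ` and every club `C ⊆ [κ]^ω`,
there is a club `C̃ ⊆ C` which is Ellentuck-closed and such that `C \ C̃` is
weakly unbounded. -/
theorem exists_ellentuck_closed_club {α : Type*}
    (hreg : (#α).IsRegular) (hunc : ℵ₀ < #α)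
    (C : Set (Set α)) (hC : IsCtblClub C) :
    ∃ Ct : Set (Set α), Ct ⊆ C ∧ IsCtblClub Ct ∧ EllentuckClosed Ct ∧
      (∀ a : Set α, a.Finite → ∃ x ∈ C \ Ct, a ⊆ x) := by
  classical
  obtain ⟨hmem, hcof, hchain⟩ := hC
  -- a choice function for cofinality
  have hex : ∀ y : Set α, ∃ x, y.Countable → x ∈ C ∧ y ⊆ x := by
    intro y
    by_cases hy : y.Countable
    · obtain ⟨x, hx, hyx⟩ := hcof y hy
      exact ⟨x, fun _ => ⟨hx, hyx⟩⟩
    · exact ⟨∅, fun h => absurd h hy⟩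
  choose pick hpick using hex
  set F : Finset α → Set α := FF pick with hF
  have hFeq : ∀ s : Finset α, F s = pick (↑s ∪ ⋃ t ∈ s.ssubsets, F t) :=
    fun s => FF_eq pick s
  -- every countable set misses some point
  have hmiss : ∀ y : Set α, y.Countable → ∃ γ, γ ∉ y := by
    intro y hy
    by_contra h
    push_neg at h
    have h1 : (Set.univ : Set α).Countable := hy.mono (fun z _ => h z)
    have : Countable α := Set.countable_univ_iff.1 h1
    exact absurd Cardinal.mk_le_aleph0 (not_le.2 hunc)
  -- basic properties of F, by strong induction on card
  have hFkey : ∀ n : ℕ, ∀ s : Finset α, s.card ≤ n →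
      F s ∈ C ∧ ↑s ⊆ F s ∧ ∀ t ∈ s.ssubsets, F t ⊆ F s := by
    intro n
    induction n with
    | zero =>
      intro s hs
      have hs0 : s = ∅ := Finset.card_eq_zero.1 (Nat.le_zero.1 hs)
      subst hs0
      have harg : ((↑(∅ : Finset α) : Set α) ∪ ⋃ t ∈ (∅ : Finset α).ssubsets, F t).Countable := by
        simp [Finset.ssubsets]
      have hp := hpick _ harg
      refine ⟨by rw [hFeq]; exact hp.1, ?_, ?_⟩
      · rw [hFeq]; exact (Set.subset_union_left).trans hp.2
      · intro t ht
        exact absurd (Finset.mem_ssubsets.1 ht) (Finset.not_ssubset_empty t)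
    | succ n ih =>
      intro s hs
      have harg : ((↑s : Set α) ∪ ⋃ t ∈ s.ssubsets, F t).Countable := by
        refine Set.Countable.union s.countable_toSet ?_
        refine Set.Countable.biUnion (Set.Finite.countable (Finset.finite_toSet _)) ?_
        intro t ht
        have htc : t.card ≤ n := by
          have := Finset.card_lt_card (Finset.mem_ssubsets.1 ht)
          omega
        exact (hmem _ ((ih t htc).1)).1
      have hp := hpick _ harg
      refine ⟨by rw [hFeq]; exact hp.1, ?_, ?_⟩
      · rw [hFeq]; exact (Set.subset_union_left).trans hp.2
      · intro t ht
        have hsub : F t ⊆ (↑s : Set α) ∪ ⋃ t ∈ s.ssubsets, F t := by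
          intro z hz
          exact Set.mem_union_right _ (Set.mem_biUnion ht hz)
        rw [hFeq s]
        exact hsub.trans hp.2
  have hFC : ∀ s : Finset α, F s ∈ C := fun s => (hFkey s.card s le_rfl).1
  have hFsub : ∀ s : Finset α, ↑s ⊆ F s := fun s => (hFkey s.card s le_rfl).2.1
  have hFmono : ∀ s t : Finset α, s ⊆ t → F s ⊆ F t := by
    intro s t hst
    rcases eq_or_ne s t with rfl | hne
    · exact le_rfl
    · exact (hFkey t.card t le_rfl).2.2 s
        (Finset.mem_ssubsets.2 ⟨hst, fun h => hne (le_antisymm hst h)⟩)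
  have hFctbl : ∀ s : Finset α, (F s).Countable := fun s => (hmem _ (hFC s)).1
  -- the extra point avoiding `F s`
  choose γ hγ using fun s : Finset α => hmiss (F s) (hFctbl s)
  set Φ : Finset α → Set α := fun s => F s ∪ {γ s} with hΦ
  have hΦs : ∀ s, Φ s = F s ∪ {γ s} := fun s => rfl
  have hΦctbl : ∀ s, (Φ s).Countable := by
    intro s; rw [hΦs]; exact (hFctbl s).union (Set.countable_singleton _)
  set Ct : Set (Set α) :=
    {x | CtblInf x ∧ ∀ s : Finset α, ↑s ⊆ x → Φ s ⊆ x} with hCt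
  have hCtC : Ct ⊆ C := by
    rintro x ⟨⟨hxc, hxi⟩, hcl⟩
    obtain ⟨e, he⟩ := hxc.exists_eq_range hxi.nonempty
    set u : ℕ → Finset α := fun n => (Finset.range (n + 1)).image e with hu
    have husub : ∀ n, ↑(u n) ⊆ x := by
      intro n z hz
      simp only [hu, Finset.coe_image, Set.mem_image] at hz
      obtain ⟨k, -, rfl⟩ := hz
      rw [he]; exact Set.mem_range_self _
    have humono : Monotone u := by
      intro m n hmn
      exact Finset.image_subset_image (Finset.range_subset_range.2 (by omega))
    have hymono : Monotone (fun n => F (u n)) := fun m n hmn => hFmono _ _ (humono hmn)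
    have hyC : ∀ n, F (u n) ∈ C := fun n => hFC _
    have hxe : x = ⋃ n, F (u n) := by
      apply Set.Subset.antisymm
      · intro z hz
        rw [he] at hz
        obtain ⟨k, rfl⟩ := hz
        refine Set.mem_iUnion.2 ⟨k, hFsub (u k) ?_⟩
        simp only [hu, Finset.coe_image, Set.mem_image]
        refine ⟨k, by simp, rfl⟩
      · refine Set.iUnion_subset fun n => ?_
        have h1 := hcl (u n) (husub n)
        rw [hΦs] at h1
        exact (Set.subset_union_left).trans h1
    rw [hxe]
    exact hchain _ hymono hyC
  refine ⟨Ct, hCtC, ?_, ?_, ?_⟩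
  · -- IsClub Ct
    refine ⟨fun x hx => hx.1, ?_, ?_⟩
    · -- cofinal
      intro y hy
      set X : ℕ → Set α := fun n => Nat.rec (y ∪ F ∅)
        (fun _ Xn => Xn ∪ ⋃ s ∈ {t : Finset α | ↑t ⊆ Xn}, Φ s) n with hX
      have hX0 : X 0 = y ∪ F ∅ := rfl
      have hXs : ∀ n, X (n + 1) = X n ∪ ⋃ s ∈ {t : Finset α | ↑t ⊆ X n}, Φ s := fun n => rfl
      have hXc : ∀ n, (X n).Countable := by
        intro n
        induction n with
        | zero => exact hy.union (hFctbl ∅)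
        | succ n ih =>
          rw [hXs]
          refine ih.union (Set.Countable.biUnion ?_ fun s _ => hΦctbl s)
          have hsub : {t : Finset α | ↑t ⊆ X n} ⊆ (fun t : Finset α => (↑t : Set α)) ⁻¹'
              {t | Set.Finite t ∧ t ⊆ X n} := by
            intro t ht; exact ⟨t.finite_toSet, ht⟩
          exact ((Set.countable_setOf_finite_subset ih).preimage Finset.coe_injective).mono hsub
      have hXmono : Monotone X := by
        refine monotone_nat_of_le_succ fun n => ?_
        rw [hXs]; exact Set.subset_union_left
      refine ⟨⋃ n, X n, ⟨⟨Set.countable_iUnion hXc, ?_⟩, ?_⟩, ?_⟩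
      · have hsub : F ∅ ⊆ ⋃ n, X n := by
          refine Set.subset_iUnion_of_subset 0 ?_
          rw [hX0]; exact Set.subset_union_right
        exact ((hmem _ (hFC ∅)).2).mono hsub
      · intro s hs
        obtain ⟨n, hn⟩ := finset_subset_iUnion_mono hXmono s hs
        refine Set.Subset.trans ?_ (Set.subset_iUnion X (n + 1))
        rw [hXs]
        intro z hz
        exact Set.mem_union_right _ (Set.mem_biUnion hn hz)
      · exact (Set.subset_union_left).trans (Set.subset_iUnion X 0)
    · -- chain closure
      intro s hmono hmemCt
      refine ⟨⟨Set.countable_iUnion fun n => (hmemCt n).1.1,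
        ((hmemCt 0).1.2).mono (Set.subset_iUnion s 0)⟩, ?_⟩
      intro t ht
      obtain ⟨n, hn⟩ := finset_subset_iUnion_mono hmono t ht
      exact ((hmemCt n).2 t hn).trans (Set.subset_iUnion s n)
  · -- Ellentuck closed
    intro x hx h
    refine ⟨hx, fun s hs => ?_⟩
    obtain ⟨y, hyCt, -, hsy, hyx⟩ := h ↑s s.finite_toSet hs
    exact (hyCt.2 s hsy).trans hyx
  · -- weak unboundedness of the complement
    intro a ha
    refine ⟨F ha.toFinset, ⟨hFC _, ?_⟩, ?_⟩
    · rintro ⟨-, hcl⟩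
      have h1 := hcl ha.toFinset (by simpa using hFsub ha.toFinset)
      rw [hΦs] at h1
      exact hγ ha.toFinset (h1 (Set.mem_union_right _ rfl))
    · have h2 := hFsub ha.toFinset
      intro z hz
      exact h2 (by simpa using hz)
end

section
/- Let κ be an uncountable cardinal and f : List κ → κ. If (x_n)_{n<ω} is a strictly ⊆-increasing sequence of countable subsets of κ each closed under f, then the union x = ⋃_n x_n is a countably infinite subset of κ that is closed under f and is not equal to cl_f(a) for any finite a ⊆ κ; in particular x ∈ C̃ := C(f) \ {cl_f(a) : a ⊆ κ finite}. -/
open Set Cardinal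

/-- `x ⊆ κ` is closed under the finitary function `f`. -/
def ClosedUnder {α : Type*} (f : List α → α) (x : Set α) : Prop :=
  ∀ l : List α, (∀ b ∈ l, b ∈ x) → f l ∈ x

/-- The `f`-closure of `a`: the smallest `f`-closed superset of `a`. -/
def clf {α : Type*} (f : List α → α) (a : Set α) : Set α :=
  ⋂₀ {y : Set α | a ⊆ y ∧ ClosedUnder f y}

/-- `C(f)`: the set of countably infinite subsets of `κ` closed under `f`. -/
def Cf {α : Type*} (f : List α → α) : Set (Set α) :=
  {x : Set α | x.Countable ∧ x.Infinite ∧ ClosedUnder f x}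

/-- `C̃ = C(f) \ {cl_f(a) : a finite}`. -/
def Ctil {α : Type*} (f : List α → α) : Set (Set α) :=
  Cf f \ {x : Set α | ∃ a : Set α, a.Finite ∧ x = clf f a}

/-- A finite set contained in a monotone union lies in some term. -/
lemma finite_subset_iUnion_mono {α : Type*} {s : ℕ → Set α} (hmono : Monotone s)
    {a : Set α} (ha : a.Finite) (hsub : a ⊆ ⋃ n, s n) : ∃ N, a ⊆ s N := by
  choose g hg using fun b (hb : b ∈ a) => mem_iUnion.mp (hsub hb)
  rcases ha.exists_finset_coe with ⟨t, rfl⟩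
  classical
  refine ⟨t.sup (fun b => if h : (b : α) ∈ (t : Set α) then g b h else 0), fun b hb => ?_⟩
  have hb' : b ∈ (t : Set α) := hb
  refine hmono (le_trans (le_of_eq ?_) (Finset.le_sup (f := fun b => if h : (b : α) ∈ (t : Set α) then g b h else 0) hb')) (hg b hb')
  simp [hb']

/-- The union of a strictly `⊆`-increasing `ω`-sequence of countable `f`-closed
subsets of an uncountable `κ` is a countably infinite `f`-closed set which is
not the `f`-closure of any finite set; in particular it belongs to `C̃`. -/
theorem iUnion_strictMono_mem_Ctil {α : Type*} (hunc : ℵ₀ < #α)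
    (f : List α → α) (s : ℕ → Set α) (hmono : StrictMono s)
    (hs : ∀ n, (s n).Countable ∧ ClosedUnder f (s n)) :
    (⋃ n, s n).Countable ∧ (⋃ n, s n).Infinite ∧ ClosedUnder f (⋃ n, s n) ∧
    (∀ a : Set α, a.Finite → (⋃ n, s n) ≠ clf f a) ∧
    (⋃ n, s n) ∈ Ctil f := by
  have hmono' : Monotone s := hmono.monotone
  have hcnt : (⋃ n, s n).Countable := countable_iUnion fun n => (hs n).1
  have hinf : (⋃ n, s n).Infinite := by
    intro hfin
    have : Function.Injective s := hmono.injective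
    have : Set.range s ⊆ {b | b ⊆ ⋃ n, s n} := by
      rintro _ ⟨n, rfl⟩; exact subset_iUnion s n
    have hrfin : (Set.range s).Finite := hfin.finite_subsets.subset this
    exact Set.infinite_range_of_injective hmono.injective hrfin
  have hcl : ClosedUnder f (⋃ n, s n) := by
    intro l hl
    have : {b | b ∈ l} ⊆ ⋃ n, s n := fun b hb => hl b hb
    obtain ⟨N, hN⟩ := finite_subset_iUnion_mono hmono' (List.finite_toSet l) this
    exact mem_iUnion.mpr ⟨N, (hs N).2 l fun b hb => hN hb⟩
  have hne : ∀ a : Set α, a.Finite → (⋃ n, s n) ≠ clf f a := by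
    intro a ha heq
    have hasub : a ⊆ ⋃ n, s n := by
      rw [heq]; exact fun b hb => fun y hy => hy.1 hb
    obtain ⟨N, hN⟩ := finite_subset_iUnion_mono hmono' ha hasub
    have hsubN : (⋃ n, s n) ⊆ s N := by
      rw [heq]; exact sInter_subset_of_mem ⟨hN, (hs N).2⟩
    have : s (N + 1) ⊆ s N := (subset_iUnion s (N + 1)).trans hsubN
    exact absurd (this.antisymm (hmono' (Nat.le_succ N))).symm
      (hmono (Nat.lt_succ_self N)).ne
  refine ⟨hcnt, hinf, hcl, hne, ⟨⟨hcnt, hinf, hcl⟩, ?_⟩⟩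
  rintro ⟨a, ha, heq⟩
  exact hne a ha heq
end

section
/- Let κ be an uncountable cardinal, f : List κ → κ, and C̃ := C(f) \ {cl_f(a) : a ⊆ κ finite}. Then C̃ is closed in the Ellentuck topology: if x is a countably infinite subset of κ such that for every finite a ⊆ x there exists y ∈ C̃ with a ⊆ y ⊆ x, then x ∈ C̃, i.e., x is closed under f and x ≠ cl_f(b) for every finite b ⊆ κ. -/
open Set Cardinal

/-- `C̃` is Ellentuck-closed: if `x` is countably infinite and every basic
neighborhood `[a, x]` of `x` meets `C̃`, then `x ∈ C̃`, that is, `x` is closed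
under `f` and is not the `f`-closure of any finite set. -/
theorem Ctil_ellentuckClosed {α : Type*} (hunc : ℵ₀ < #α)
    (f : List α → α) (x : Set α) (hxc : x.Countable) (hxi : x.Infinite)
    (h : ∀ a : Set α, a.Finite → a ⊆ x → ∃ y ∈ Ctil f, a ⊆ y ∧ y ⊆ x) :
    x ∈ Ctil f ∧ ClosedUnder f x ∧ ∀ b : Set α, b.Finite → x ≠ clf f b := by
  have hclosed : ClosedUnder f x := by
    intro l hl
    obtain ⟨y, hy, hly, hyx⟩ := h {b | b ∈ l} l.finite_toSet (fun b hb => hl b hb)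
    exact hyx (hy.1.2.2 l (fun b hb => hly hb))
  have hne : ∀ b : Set α, b.Finite → x ≠ clf f b := by
    intro b hb hxe
    have hbx : b ⊆ x := by
      rw [hxe]
      exact fun z hz => fun y hy => hy.1 hz
    obtain ⟨y, ⟨hyCf, hynot⟩, hby, hyx⟩ := h b hb hbx
    have h1 : clf f b ⊆ y := sInter_subset_of_mem ⟨hby, hyCf.2.2⟩
    have hyeq : y = clf f b := subset_antisymm (hxe ▸ hyx) h1
    exact hynot ⟨b, hb, hyeq⟩
  exact ⟨⟨⟨hxc, hxi, hclosed⟩, fun ⟨b, hb, he⟩ => hne b hb he⟩, hclosed, hne⟩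
end
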